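/- The braiding map ψ defined on generators by the nine relations ψ(q^N⊗q^N)=q²Q₁⁻¹ q^N⊗q^N, ψ(q^N⊗a)=qQ₁⁻¹ a⊗q^N, ψ(a*⊗q^N)=qQ₁⁻¹ q^N⊗a*, ψ(q^N⊗a*)=q a*⊗q^N + Q₁⁻¹(q²−Q₁) q^N⊗a*, ψ(a⊗q^N)=q q^N⊗a + Q₁⁻¹(q²−Q₁) a⊗q^N, ψ(a⊗a)=q²Q₁⁻¹ a⊗a, ψ(a*⊗a*)=q²Q₁⁻¹ a*⊗a*, ψ(a⊗a*)=Q₁⁻¹(q²−Q₁) a⊗a* + Q₁ a*⊗a + q^N⊗q^N, ψ(a*⊗a)=−q²Q₁⁻² q^N⊗q^N + q²Q₁⁻² a⊗a*, viewed as a linear map V⊗V → V⊗V on the span V of {a, a*, q^N}, satisfies the braid equation (ψ⊗id)(id⊗ψ)(ψ⊗id) = (id⊗ψ)(ψ⊗id)(id⊗ψ) on V⊗V⊗V. -/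
import Mathlib


/-- `M ⊗ id` acting on the first two tensor factors of `V ⊗ V ⊗ V`. -/
noncomputable def op12 {K : Type*} [Field K]
    (M : Matrix (Fin 3 × Fin 3) (Fin 3 × Fin 3) K) :
    Matrix (Fin 3 × Fin 3 × Fin 3) (Fin 3 × Fin 3 × Fin 3) K := fun r c =>
  M (r.1, r.2.1) (c.1, c.2.1) * (if r.2.2 = c.2.2 then 1 else 0)

/-- `M` acting on the first and third tensor factors of `V ⊗ V ⊗ V`. -/
noncomputable def op13 {K : Type*} [Field K]
    (M : Matrix (Fin 3 × Fin 3) (Fin 3 × Fin 3) K) :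
    Matrix (Fin 3 × Fin 3 × Fin 3) (Fin 3 × Fin 3 × Fin 3) K := fun r c =>
  M (r.1, r.2.2) (c.1, c.2.2) * (if r.2.1 = c.2.1 then 1 else 0)

/-- `id ⊗ M` acting on the last two tensor factors of `V ⊗ V ⊗ V`. -/
noncomputable def op23 {K : Type*} [Field K]
    (M : Matrix (Fin 3 × Fin 3) (Fin 3 × Fin 3) K) :
    Matrix (Fin 3 × Fin 3 × Fin 3) (Fin 3 × Fin 3 × Fin 3) K := fun r c =>
  (if r.1 = c.1 then 1 else 0) * M (r.2.1, r.2.2) (c.2.1, c.2.2)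

/-- The matrix of the braiding map `ψ` on `V ⊗ V`, where `V` has ordered basis
`a, a*, q^N` (indexed `0, 1, 2`): the entry at row `(k,l)`, column `(i,j)` is
the coefficient of `x_k ⊗ x_l` in `ψ(x_i ⊗ x_j)`, given by the nine listed
braiding relations. -/
noncomputable def PsiMat {K : Type*} [Field K] (q Q1 : K) :
    Matrix (Fin 3 × Fin 3) (Fin 3 × Fin 3) K := fun r c =>
  -- ψ(a⊗a) = q²Q₁⁻¹ a⊗a
  if r = ((0 : Fin 3), (0 : Fin 3)) ∧ c = ((0 : Fin 3), (0 : Fin 3)) then q ^ 2 * Q1⁻¹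
  -- ψ(a*⊗a*) = q²Q₁⁻¹ a*⊗a*
  else if r = (1, 1) ∧ c = (1, 1) then q ^ 2 * Q1⁻¹
  -- ψ(q^N⊗q^N) = q²Q₁⁻¹ q^N⊗q^N
  else if r = (2, 2) ∧ c = (2, 2) then q ^ 2 * Q1⁻¹
  -- ψ(q^N⊗a) = qQ₁⁻¹ a⊗q^N
  else if r = (0, 2) ∧ c = (2, 0) then q * Q1⁻¹
  -- ψ(a*⊗q^N) = qQ₁⁻¹ q^N⊗a*
  else if r = (2, 1) ∧ c = (1, 2) then q * Q1⁻¹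
  -- ψ(q^N⊗a*) = q a*⊗q^N + Q₁⁻¹(q²−Q₁) q^N⊗a*
  else if r = (1, 2) ∧ c = (2, 1) then q
  else if r = (2, 1) ∧ c = (2, 1) then Q1⁻¹ * (q ^ 2 - Q1)
  -- ψ(a⊗q^N) = q q^N⊗a + Q₁⁻¹(q²−Q₁) a⊗q^N
  else if r = (2, 0) ∧ c = (0, 2) then q
  else if r = (0, 2) ∧ c = (0, 2) then Q1⁻¹ * (q ^ 2 - Q1)
  -- ψ(a⊗a*) = Q₁⁻¹(q²−Q₁) a⊗a* + Q₁ a*⊗a + q^N⊗q^N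
  else if r = (0, 1) ∧ c = (0, 1) then Q1⁻¹ * (q ^ 2 - Q1)
  else if r = (1, 0) ∧ c = (0, 1) then Q1
  else if r = (2, 2) ∧ c = (0, 1) then 1
  -- ψ(a*⊗a) = −q²Q₁⁻² q^N⊗q^N + q²Q₁⁻² a⊗a*
  else if r = (2, 2) ∧ c = (1, 0) then -(q ^ 2 * Q1⁻¹ ^ 2)
  else if r = (0, 1) ∧ c = (1, 0) then q ^ 2 * Q1⁻¹ ^ 2
  else 0


noncomputable def NMat {K : Type*} [Field K] (q Q1 : K) :
    Matrix (Fin 3 × Fin 3) (Fin 3 × Fin 3) K := fun r c =>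
  if r = ((0 : Fin 3), (0 : Fin 3)) ∧ c = ((0 : Fin 3), (0 : Fin 3)) then q ^ 2 * Q1
  else if r = (1, 1) ∧ c = (1, 1) then q ^ 2 * Q1
  else if r = (2, 2) ∧ c = (2, 2) then q ^ 2 * Q1
  else if r = (0, 2) ∧ c = (2, 0) then q * Q1
  else if r = (2, 1) ∧ c = (1, 2) then q * Q1
  else if r = (1, 2) ∧ c = (2, 1) then q * Q1 ^ 2
  else if r = (2, 1) ∧ c = (2, 1) then Q1 * (q ^ 2 - Q1)
  else if r = (2, 0) ∧ c = (0, 2) then q * Q1 ^ 2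
  else if r = (0, 2) ∧ c = (0, 2) then Q1 * (q ^ 2 - Q1)
  else if r = (0, 1) ∧ c = (0, 1) then Q1 * (q ^ 2 - Q1)
  else if r = (1, 0) ∧ c = (0, 1) then Q1 ^ 3
  else if r = (2, 2) ∧ c = (0, 1) then Q1 ^ 2
  else if r = (2, 2) ∧ c = (1, 0) then -q ^ 2
  else if r = (0, 1) ∧ c = (1, 0) then q ^ 2
  else 0

set_option maxHeartbeats 2000000 in
lemma psi_eq_smul {K : Type*} [Field K] (q Q1 : K) (hQ1 : Q1 ≠ 0) :
    PsiMat q Q1 = Q1⁻¹ ^ 2 • NMat q Q1 := by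
  ext ⟨r1, r2⟩ ⟨c1, c2⟩
  fin_cases r1 <;> fin_cases r2 <;> fin_cases c1 <;> fin_cases c2 <;>
    simp [PsiMat, NMat, Matrix.smul_apply, Prod.ext_iff] <;> field_simp <;> ring

lemma prodA {K : Type*} [Field K] (M N : Matrix (Fin 3 × Fin 3) (Fin 3 × Fin 3) K)
    (r1 r2 r3 c1 c2 c3 : Fin 3) :
    (op12 M * op23 N) (r1, r2, r3) (c1, c2, c3) =
      ∑ k : Fin 3, M (r1, r2) (c1, k) * N (k, r3) (c2, c3) := by
  simp [Matrix.mul_apply, op12, op23, Fintype.sum_prod_type, mul_ite, ite_mul,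
    mul_zero, zero_mul, mul_one, one_mul, Finset.sum_ite_eq, Finset.sum_ite_eq']

lemma prodB {K : Type*} [Field K] (M N : Matrix (Fin 3 × Fin 3) (Fin 3 × Fin 3) K)
    (r1 r2 r3 c1 c2 c3 : Fin 3) :
    (op23 M * op12 N) (r1, r2, r3) (c1, c2, c3) =
      ∑ k : Fin 3, M (r2, r3) (k, c3) * N (r1, k) (c1, c2) := by
  simp [Matrix.mul_apply, op12, op23, Fintype.sum_prod_type, mul_ite, ite_mul,
    mul_zero, zero_mul, mul_one, one_mul, Finset.sum_ite_eq, Finset.sum_ite_eq']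

lemma lhs_entry {K : Type*} [Field K] (M : Matrix (Fin 3 × Fin 3) (Fin 3 × Fin 3) K)
    (r1 r2 r3 c1 c2 c3 : Fin 3) :
    (op12 M * op23 M * op12 M) (r1, r2, r3) (c1, c2, c3) =
      ∑ a : Fin 3, ∑ b : Fin 3,
        (∑ k : Fin 3, M (r1, r2) (a, k) * M (k, r3) (b, c3)) * M (a, b) (c1, c2) := by
  simp [Matrix.mul_apply, Fintype.sum_prod_type, op12, op23, mul_ite, ite_mul,
    mul_zero, zero_mul, mul_one, one_mul, Finset.sum_ite_eq, Finset.sum_ite_eq']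

lemma rhs_entry {K : Type*} [Field K] (M : Matrix (Fin 3 × Fin 3) (Fin 3 × Fin 3) K)
    (r1 r2 r3 c1 c2 c3 : Fin 3) :
    (op23 M * op12 M * op23 M) (r1, r2, r3) (c1, c2, c3) =
      ∑ b : Fin 3, ∑ g : Fin 3,
        (∑ k : Fin 3, M (r2, r3) (k, g) * M (r1, k) (c1, b)) * M (b, g) (c2, c3) := by
  simp [Matrix.mul_apply, Fintype.sum_prod_type, op23, op12, mul_ite, ite_mul,
    mul_zero, zero_mul, mul_one, one_mul, Finset.sum_ite_eq, Finset.sum_ite_eq']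

lemma op12_smul {K : Type*} [Field K] (c : K) (M : Matrix (Fin 3 × Fin 3) (Fin 3 × Fin 3) K) :
    op12 (c • M) = c • op12 M := by
  ext r c'; simp [op12, Matrix.smul_apply, smul_eq_mul, mul_assoc]

lemma op23_smul {K : Type*} [Field K] (c : K) (M : Matrix (Fin 3 × Fin 3) (Fin 3 × Fin 3) K) :
    op23 (c • M) = c • op23 M := by
  ext r c'
  simp only [op23, Matrix.smul_apply, Pi.smul_apply, smul_eq_mul]
  ring


set_option maxHeartbeats 100000000 in
lemma braidN {K : Type*} [Field K] (q Q1 : K) :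
    op12 (NMat q Q1) * op23 (NMat q Q1) * op12 (NMat q Q1) =
      op23 (NMat q Q1) * op12 (NMat q Q1) * op23 (NMat q Q1) := by
  ext ⟨r1, r2, r3⟩ ⟨c1, c2, c3⟩
  rw [lhs_entry, rhs_entry]
  fin_cases r1 <;> fin_cases r2 <;> fin_cases r3 <;> fin_cases c1 <;> fin_cases c2 <;> fin_cases c3 <;>
    simp [NMat, Fin.sum_univ_three, Prod.ext_iff] <;> first | ring1 | (exact Or.inl (by ring)) | tauto

/-- the braiding map `ψ : V ⊗ V → V ⊗ V` determined by the nine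
listed values satisfies the braid equation
`(ψ⊗id)(id⊗ψ)(ψ⊗id) = (id⊗ψ)(ψ⊗id)(id⊗ψ)` on `V ⊗ V ⊗ V`. -/
theorem braiding_braid_equation {K : Type*} [Field K] (q Q1 : K)
    (hq : q ≠ 0) (hQ1 : Q1 ≠ 0) :
    op12 (PsiMat q Q1) * op23 (PsiMat q Q1) * op12 (PsiMat q Q1) =
      op23 (PsiMat q Q1) * op12 (PsiMat q Q1) * op23 (PsiMat q Q1) := by
  rw [psi_eq_smul q Q1 hQ1, op12_smul, op23_smul]
  simp only [Matrix.smul_mul, Matrix.mul_smul, smul_smul]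
  rw [braidN]
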